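/- arXiv:2401.16493 — 3 statements merged into one kernel-verified Lean document; each statement's English description precedes it below -/
import Mathlib

section
/- For every k ≥ 0 and |z| < 1/4, Σ_{n=k}^∞ A_{n,k+1} z^n = z^k C(z)^{2k+1} = C(z)(C(z)-1)^k, where A_{n,k} = ((2k-1)/(2n+1)) binomial(2n+1, n+1-k). -/
/-!
The column entries are ballot numbers, `A_{n+k,k+1} = b(2k+1, n)` with
`b(m, n) = m/(2n+m) · binom(2n+m, n)`, and `∑ₙ b(m, n) zⁿ = C(z)^m`. For `m = 1, 2` the ballot
numbers are `Cₙ` and `Cₙ₊₁`, so there this is the definition of `C` and the Catalan convolution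
`C² = ∑ Cₙ₊₁ zⁿ`. Pascal's rule gives `b(m+1, n+1) = b(m, n+1) + b(m+2, n)`, i.e.
`z F_{m+2} = F_{m+1} - F_m` for the generating functions `F_m`, which is also the recurrence of
`C^m` since `z C² = C - 1`. Absolute convergence for `|z| < 1/4` comes from `b(m, n) ≤ 2^m 4^n`.
-/

noncomputable def catalanGF (z : ℂ) : ℂ := ∑' n : ℕ, (catalan n : ℂ) * z ^ n

noncomputable def catalanTriangleA (n k : ℕ) : ℂ :=
  ((2 * k - 1 : ℂ)) / (2 * n + 1) * ((2 * n + 1).choose (n + 1 - k))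

-- For `m = n = 0` this is `0 / 0 = 0`, not the constant term `1` of `C(z)^0`.
noncomputable def ballot (m n : ℕ) : ℂ :=
  (m : ℂ) / (2 * n + m : ℕ) * ((2 * n + m).choose n : ℕ)

lemma ballot_zero_left (n : ℕ) : ballot 0 n = 0 := by
  simp [ballot]

lemma ballot_zero_right {m : ℕ} (hm : m ≠ 0) : ballot m 0 = 1 := by
  simp [ballot, hm]

lemma ballot_one (n : ℕ) : ballot 1 n = catalan n := by
  have hchoose : (2 * n + 1).choose n * (n + 1) = (2 * n + 1) * catalan n * (n + 1) := by
    rw [← Nat.choose_symm_half, ← Nat.add_one_mul_choose_eq, ← Nat.centralBinom_eq_two_mul_choose,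
      ← succ_mul_catalan_eq_centralBinom]
    ring
  rw [ballot, Nat.eq_of_mul_eq_mul_right n.succ_pos hchoose]
  have : ((2 * n + 1 : ℕ) : ℂ) ≠ 0 := Nat.cast_ne_zero.mpr (by omega)
  field_simp
  push_cast
  ring

lemma ballot_succ_succ (m n : ℕ) :
    ballot (m + 1) (n + 1) = ballot m (n + 1) + ballot (m + 2) n := by
  have hpascal : (2 * n + m + 3).choose (n + 1) =
      (2 * n + m + 2).choose n + (2 * n + m + 2).choose (n + 1) :=
    Nat.choose_succ_succ _ _
  have hshift : ((2 * n + m + 2).choose (n + 1) : ℂ) * (n + 1) =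
      ((2 * n + m + 2).choose n : ℂ) * (n + m + 2) := by
    have := Nat.choose_succ_right_eq (2 * n + m + 2) n
    rw [show 2 * n + m + 2 - n = n + m + 2 by omega] at this
    exact_mod_cast this
  rw [ballot, ballot, ballot, show 2 * (n + 1) + (m + 1) = 2 * n + m + 3 by ring,
    show 2 * (n + 1) + m = 2 * n + m + 2 by ring, show 2 * n + (m + 2) = 2 * n + m + 2 by ring,
    hpascal]
  have h3 : ((2 * n + m + 3 : ℕ) : ℂ) ≠ 0 := Nat.cast_ne_zero.mpr (by omega)
  have h2 : ((2 * n + m + 2 : ℕ) : ℂ) ≠ 0 := Nat.cast_ne_zero.mpr (by omega)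
  push_cast at h2 h3 ⊢
  field_simp
  linear_combination (2 : ℂ) * hshift

lemma ballot_two (n : ℕ) : ballot 2 n = catalan (n + 1) := by
  rw [← ballot_one, ballot_succ_succ, ballot_zero_left, zero_add]

lemma norm_ballot_le (m n : ℕ) : ‖ballot m n‖ ≤ 2 ^ m * 4 ^ n := by
  have hfrac : ‖(m : ℂ) / (2 * n + m : ℕ)‖ ≤ 1 := by
    rw [norm_div, Complex.norm_natCast, Complex.norm_natCast]
    exact div_le_one_of_le₀ (by exact_mod_cast Nat.le_add_left m (2 * n)) (Nat.cast_nonneg _)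
  calc ‖ballot m n‖ ≤ 1 * ((2 * n + m).choose n : ℝ) := by
        rw [ballot, norm_mul, Complex.norm_natCast]; gcongr
    _ ≤ 2 ^ (2 * n + m) := by rw [one_mul]; exact_mod_cast Nat.choose_le_two_pow _ _
    _ = 2 ^ m * 4 ^ n := by rw [pow_add, pow_mul]; norm_num; ring

lemma summable_norm_ballot_mul_pow {z : ℂ} (hz : ‖z‖ < 1 / 4) (m : ℕ) :
    Summable fun n => ‖ballot m n * z ^ n‖ := by
  have hgeom : Summable fun n : ℕ => (2 : ℝ) ^ m * (4 * ‖z‖) ^ n :=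
    (summable_geometric_of_lt_one (by positivity) (by linarith)).mul_left _
  refine hgeom.of_nonneg_of_le (fun n => norm_nonneg _) fun n => ?_
  rw [norm_mul, norm_pow, mul_pow, ← mul_assoc]
  gcongr
  exact norm_ballot_le m n

lemma summable_ballot_mul_pow {z : ℂ} (hz : ‖z‖ < 1 / 4) (m : ℕ) :
    Summable fun n => ballot m n * z ^ n :=
  (summable_norm_ballot_mul_pow hz m).of_norm

noncomputable def ballotGF (m : ℕ) (z : ℂ) : ℂ := ∑' n, ballot m n * z ^ n

lemma ballotGF_one : ballotGF 1 = catalanGF := by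
  ext z
  simp only [ballotGF, catalanGF, ballot_one]

lemma ballotGF_zero_left (z : ℂ) : ballotGF 0 z = 0 := by
  simp [ballotGF, ballot_zero_left]

lemma ballotGF_zero_right {m : ℕ} (hm : m ≠ 0) : ballotGF m 0 = 1 := by
  rw [ballotGF, tsum_eq_single 0 fun n hn => by simp [zero_pow hn]]
  simp [ballot_zero_right hm]

lemma catalanGF_sq {z : ℂ} (hz : ‖z‖ < 1 / 4) : catalanGF z ^ 2 = ballotGF 2 z := by
  have hs := summable_norm_ballot_mul_pow hz 1
  simp only [ballot_one] at hs
  rw [sq, catalanGF, tsum_mul_tsum_eq_tsum_sum_antidiagonal_of_summable_norm hs hs]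
  refine tsum_congr fun n => ?_
  rw [ballot_two, catalan_succ', Nat.cast_sum, Finset.sum_mul]
  refine Finset.sum_congr rfl fun ij hij => ?_
  rw [← Finset.HasAntidiagonal.mem_antidiagonal.mp hij, pow_add, Nat.cast_mul]
  ring

lemma mul_ballotGF_add_two {z : ℂ} (hz : ‖z‖ < 1 / 4) (m : ℕ) :
    z * ballotGF (m + 2) z =
      (ballotGF (m + 1) z - ballot (m + 1) 0) - (ballotGF m z - ballot m 0) := by
  have htail : ∀ j, ballotGF j z - ballot j 0 = ∑' n, ballot j (n + 1) * z ^ (n + 1) := fun j => by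
    rw [ballotGF, (summable_ballot_mul_pow hz j).tsum_eq_zero_add]
    simp
  have hsummable : ∀ j, Summable fun n => ballot j (n + 1) * z ^ (n + 1) := fun j =>
    (summable_nat_add_iff 1).mpr (summable_ballot_mul_pow hz j)
  rw [htail, htail, ← (hsummable _).tsum_sub (hsummable _), ballotGF, ← tsum_mul_left]
  exact tsum_congr fun n => by rw [ballot_succ_succ, pow_succ]; ring

lemma mul_catalanGF_sq {z : ℂ} (hz : ‖z‖ < 1 / 4) : z * catalanGF z ^ 2 = catalanGF z - 1 := by
  simpa [catalanGF_sq hz, ballotGF_zero_left, ballot_zero_left, ballot_zero_right, ballotGF_one]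
    using mul_ballotGF_add_two hz 0

lemma ballotGF_eq_pow {z : ℂ} (hz : ‖z‖ < 1 / 4) :
    ∀ m : ℕ, ballotGF (m + 1) z = catalanGF z ^ (m + 1)
  | 0 => by rw [ballotGF_one, pow_one]
  | 1 => (catalanGF_sq hz).symm
  | m + 2 => by
    rcases eq_or_ne z 0 with rfl | hz0
    · rw [← ballotGF_one, ballotGF_zero_right one_ne_zero, ballotGF_zero_right (by omega), one_pow]
    apply mul_left_cancel₀ hz0
    calc z * ballotGF (m + 3) z = ballotGF (m + 2) z - ballotGF (m + 1) z := by
          simpa [ballot_zero_right] using mul_ballotGF_add_two hz (m + 1)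
      _ = catalanGF z ^ (m + 1) * (catalanGF z - 1) := by
          rw [ballotGF_eq_pow hz (m + 1), ballotGF_eq_pow hz m]; ring
      _ = z * catalanGF z ^ (m + 3) := by rw [← mul_catalanGF_sq hz]; ring

lemma catalanTriangleA_add_eq_ballot (n k : ℕ) :
    catalanTriangleA (n + k) (k + 1) = ballot (2 * k + 1) n := by
  rw [catalanTriangleA, ballot, show n + k + 1 - (k + 1) = n by omega,
    show 2 * (n + k) + 1 = 2 * n + (2 * k + 1) by ring]
  push_cast
  ring

theorem catalanTriangleA_column_gf (k : ℕ) (z : ℂ) (hz : ‖z‖ < 1 / 4) :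
    (∑' n : ℕ, catalanTriangleA (n + k) (k + 1) * z ^ (n + k)) =
        z ^ k * catalanGF z ^ (2 * k + 1) ∧
      z ^ k * catalanGF z ^ (2 * k + 1) = catalanGF z * (catalanGF z - 1) ^ k := by
  constructor
  · calc (∑' n : ℕ, catalanTriangleA (n + k) (k + 1) * z ^ (n + k))
        = z ^ k * ∑' n : ℕ, ballot (2 * k + 1) n * z ^ n := by
          rw [← tsum_mul_left]
          exact tsum_congr fun n => by rw [catalanTriangleA_add_eq_ballot, pow_add]; ring
      _ = z ^ k * catalanGF z ^ (2 * k + 1) := by rw [← ballotGF, ballotGF_eq_pow hz]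
  · rw [← mul_catalanGF_sq hz]
    ring
end

section
/- For every k ≥ 1, Σ_{n=k}^∞ B_{n,k} / 4^n = 1, where B_{n,k} = (k/n) binomial(2n, n-k). -/
/-!
`B_{n,k} / 4^n` is the probability that a simple random walk first reaches height `2k` at
time `2n`, so the column sum is the probability that the walk ever reaches `2k`. By the
reflection principle the tail of the series after index `m` is `columnTail k m`, the mass of
the `2k` central binomial coefficients of row `2(m+k)`. Two applications of Pascal's rule
carry this window from one even row to the next, losing exactly the ballot difference
`B_{m+k+1,k} = C(2(m+k)+1, m+1) - C(2(m+k)+1, m)`; and the tail is at most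
`2k · C(2N, N) / 4^N`, which tends to `0` because `(C(2N, N) / 4^N)^2 ≤ 1 / (2N + 1)`.
-/

noncomputable def catalanTriangleB (n k : ℕ) : ℝ :=
  (k : ℝ) / n * ((2 * n).choose (n - k))

open Finset Filter Topology

noncomputable def binomWindow (r a L : ℕ) : ℝ := ∑ j ∈ range L, (r.choose (a + j) : ℝ)

lemma binomWindow_succ_start (r a L : ℕ) :
    binomWindow r (a + 1) L = binomWindow r a L - r.choose a + r.choose (a + L) := by
  have hshift := sum_range_succ' (fun j ↦ (r.choose (a + j) : ℝ)) L
  rw [sum_range_succ] at hshift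
  simp only [binomWindow, add_assoc, add_comm 1, add_zero] at hshift ⊢
  linarith

lemma binomWindow_succ_succ (r a L : ℕ) :
    binomWindow (r + 1) (a + 1) L = binomWindow r a L + binomWindow r (a + 1) L := by
  simp only [binomWindow, ← sum_add_distrib, add_right_comm a 1, Nat.choose_succ_succ',
    Nat.cast_add]

lemma binomWindow_succ_start_of_eq_add {r a L : ℕ} (h : r = a + (a + L)) :
    binomWindow r (a + 1) L = binomWindow r a L := by
  rw [binomWindow_succ_start, Nat.choose_symm_of_eq_add h, sub_add_cancel]

lemma binomWindow_two_mul_le (n a L : ℕ) : binomWindow (2 * n) a L ≤ L * n.centralBinom := by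
  calc binomWindow (2 * n) a L ≤ ∑ _j ∈ range L, (n.centralBinom : ℝ) :=
        sum_le_sum fun j _ ↦ mod_cast Nat.choose_le_centralBinom (a + j) n
    _ = L * n.centralBinom := by simp

lemma catalanTriangleB_eq_choose_sub_choose (m k : ℕ) :
    catalanTriangleB (m + k + 1) k =
      (2 * (m + k) + 1).choose (m + 1) - (2 * (m + k) + 1).choose m := by
  set s := 2 * (m + k) + 1
  have hpascal : ((s + 1).choose (m + 1) : ℝ) = s.choose m + s.choose (m + 1) :=
    mod_cast Nat.choose_succ_succ' s m
  have habsorb : (s.choose (m + 1) : ℝ) * (s + 1) = (s + 1).choose (m + 1) * (m + 2 * k + 1) := by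
    have h := Nat.choose_mul_succ_eq s (m + 1)
    rw [show s + 1 - (m + 1) = m + 2 * k + 1 by omega] at h
    exact_mod_cast h
  rw [catalanTriangleB, show m + k + 1 - k = m + 1 by omega,
    show 2 * (m + k + 1) = s + 1 by omega]
  have hs : (s : ℝ) + 1 = 2 * (m + k + 1) := by simp only [s]; push_cast; ring
  rw [hs] at habsorb
  push_cast
  field_simp
  linear_combination -habsorb - (m + k + 1 : ℝ) * hpascal

lemma binomWindow_two_mul_succ (m k : ℕ) :
    binomWindow (2 * (m + 1 + k)) (m + 1) (2 * k) =
      4 * binomWindow (2 * (m + k)) m (2 * k) - catalanTriangleB (m + k + 1) k := by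
  set r := 2 * (m + k)
  -- The window of row `r` is centred, so its two boundary terms cancel; in the odd row they
  -- do not, and their difference is the ballot number.
  have hodd : binomWindow (r + 1) (m + 1) (2 * k) = 2 * binomWindow r m (2 * k) := by
    rw [binomWindow_succ_succ, binomWindow_succ_start_of_eq_add (by omega)]
    ring
  have hodd_shift : binomWindow (r + 1) (m + 1) (2 * k) =
      binomWindow (r + 1) m (2 * k) - (r + 1).choose m + (r + 1).choose (m + 1) := by
    rw [binomWindow_succ_start,
      Nat.choose_symm_of_eq_add (show r + 1 = m + 2 * k + (m + 1) by omega)]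
  rw [show 2 * (m + 1 + k) = r + 1 + 1 by omega, binomWindow_succ_succ,
    catalanTriangleB_eq_choose_sub_choose]
  linarith

lemma centralBinom_div_four_pow_sq_le (n : ℕ) :
    ((n.centralBinom : ℝ) / 4 ^ n) ^ 2 ≤ 1 / (2 * n + 1) := by
  induction n with
  | zero => simp
  | succ n ih =>
    have hrec : ((n + 1 : ℕ) : ℝ) * (n + 1).centralBinom = 2 * (2 * n + 1) * n.centralBinom :=
      mod_cast Nat.succ_mul_centralBinom_succ n
    have hratio : ((n + 1).centralBinom : ℝ) / 4 ^ (n + 1) =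
        n.centralBinom / 4 ^ n * ((2 * n + 1) / (2 * n + 2)) := by
      push_cast at hrec
      rw [pow_succ]
      field_simp
      linear_combination 2 * hrec
    rw [hratio, mul_pow]
    calc ((n.centralBinom : ℝ) / 4 ^ n) ^ 2 * ((2 * (n : ℝ) + 1) / (2 * n + 2)) ^ 2
        ≤ 1 / (2 * (n : ℝ) + 1) * ((2 * n + 1) / (2 * n + 2)) ^ 2 := by gcongr
      _ ≤ 1 / (2 * ((n + 1 : ℕ) : ℝ) + 1) := by
          push_cast
          field_simp
          nlinarith

lemma tendsto_centralBinom_div_four_pow :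
    Tendsto (fun n : ℕ ↦ (n.centralBinom : ℝ) / 4 ^ n) atTop (𝓝 0) := by
  refine squeeze_zero (fun n ↦ by positivity)
    (fun n ↦ Real.le_sqrt_of_sq_le (centralBinom_div_four_pow_sq_le n)) ?_
  have hden : Tendsto (fun n : ℕ ↦ 2 * (n : ℝ) + 1) atTop atTop :=
    tendsto_atTop_add_const_right _ _ (tendsto_natCast_atTop_atTop.const_mul_atTop two_pos)
  have h := (Real.continuous_sqrt.tendsto 0).comp
    ((tendsto_const_nhds (x := (1 : ℝ))).div_atTop hden)
  rwa [Real.sqrt_zero] at h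

noncomputable def columnTail (k m : ℕ) : ℝ := binomWindow (2 * (m + k)) m (2 * k) / 4 ^ (m + k)

lemma columnTail_sub_succ (k m : ℕ) :
    columnTail k m - columnTail k (m + 1) = catalanTriangleB (m + 1 + k) k / 4 ^ (m + 1 + k) := by
  rw [columnTail, columnTail, binomWindow_two_mul_succ, add_right_comm m 1 k, pow_succ]
  field_simp
  ring

lemma columnTail_zero (k : ℕ) : columnTail k 0 = 1 - 1 / 4 ^ k := by
  have hrow : (∑ j ∈ range (2 * k), ((2 * k).choose j : ℝ)) + 1 = 4 ^ k := by
    have h := Nat.sum_range_choose (2 * k)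
    rw [sum_range_succ, Nat.choose_self, pow_mul] at h
    exact_mod_cast h
  simp only [columnTail, binomWindow, zero_add]
  field_simp
  linarith

lemma tendsto_columnTail (k : ℕ) : Tendsto (columnTail k) atTop (𝓝 0) := by
  have hbound (m : ℕ) :
      columnTail k m ≤ (2 * k : ℕ) * ((m + k).centralBinom / 4 ^ (m + k)) := by
    rw [columnTail, mul_div_assoc']
    gcongr
    exact binomWindow_two_mul_le _ _ _
  have hlim := ((tendsto_add_atTop_iff_nat k).mpr tendsto_centralBinom_div_four_pow).const_mul
    ((2 * k : ℕ) : ℝ)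
  rw [mul_zero] at hlim
  exact squeeze_zero (fun m ↦ by unfold columnTail binomWindow; positivity) hbound hlim

lemma sum_range_succ_catalanTriangleB_div {k : ℕ} (hk : 1 ≤ k) (N : ℕ) :
    ∑ n ∈ range (N + 1), catalanTriangleB (n + k) k / 4 ^ (n + k) = 1 - columnTail k N := by
  induction N with
  | zero =>
    have hk' : (k : ℝ) ≠ 0 := Nat.cast_ne_zero.mpr (by omega)
    simp [columnTail_zero, catalanTriangleB, hk']
  | succ N ih => rw [sum_range_succ, ih, ← columnTail_sub_succ]; ring

theorem catalanTriangleB_column_sum (k : ℕ) (hk : 1 ≤ k) :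
    (∑' n : ℕ, catalanTriangleB (n + k) k / 4 ^ (n + k)) = 1 := by
  have hnonneg (n : ℕ) : 0 ≤ catalanTriangleB (n + k) k / 4 ^ (n + k) := by
    unfold catalanTriangleB; positivity
  refine ((hasSum_iff_tendsto_nat_of_nonneg hnonneg 1).mpr ?_).tsum_eq
  rw [← tendsto_add_atTop_iff_nat 1]
  simpa [sum_range_succ_catalanTriangleB_div hk] using (tendsto_columnTail k).const_sub 1
end

section
/- For each fixed k ≥ 1, B_{n,k} is asymptotically equivalent to (4^n/√π) * k / n^{3/2} as n → ∞; i.e., lim_{n→∞} B_{n,k} * √π * n^{3/2} / (4^n * k) = 1. -/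
open Filter Topology Real Nat Stirling

theorem tendsto_natCast_add_div_natCast_add (a b : ℝ) :
    Tendsto (fun n : ℕ => ((n : ℝ) + a) / (n + b)) atTop (𝓝 1) := by
  have hden : Tendsto (fun n : ℕ => (n : ℝ) + b) atTop atTop :=
    tendsto_atTop_add_const_right _ b tendsto_natCast_atTop_atTop
  have h := (tendsto_const_nhds (x := a - b)).div_atTop hden |>.const_add 1
  rw [add_zero] at h
  refine h.congr' ?_
  filter_upwards [hden.eventually_gt_atTop 0] with n hn
  field_simp
  ring

theorem Nat.choose_two_mul_sub_mul_sub {n k : ℕ} (h : k < n) :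
    (2 * n).choose (n - k) * (n - k) = (2 * n).choose (n - (k + 1)) * (n + k + 1) := by
  have := Nat.choose_succ_right_eq (2 * n) (n - (k + 1))
  rwa [show n - (k + 1) + 1 = n - k by omega, show 2 * n - (n - (k + 1)) = n + k + 1 by omega]
    at this

theorem tendsto_choose_two_mul_sub_div_centralBinom (k : ℕ) :
    Tendsto (fun n : ℕ => ((2 * n).choose (n - k) : ℝ) / n.centralBinom) atTop (𝓝 1) := by
  induction k with
  | zero =>
    refine tendsto_const_nhds.congr fun n => ?_
    rw [Nat.sub_zero, ← Nat.centralBinom_eq_two_mul_choose,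
      div_self (by exact_mod_cast n.centralBinom_ne_zero)]
  | succ k ih =>
    have h := ih.mul (tendsto_natCast_add_div_natCast_add (-k) (k + 1))
    rw [mul_one] at h
    refine h.congr' ?_
    filter_upwards [eventually_gt_atTop k] with n hn
    have hstep : ((2 * n).choose (n - k) : ℝ) * (n - k) =
        (2 * n).choose (n - (k + 1)) * (n + k + 1) := by
      simpa [Nat.cast_sub hn.le] using
        congrArg (Nat.cast (R := ℝ)) (Nat.choose_two_mul_sub_mul_sub hn)
    have hcb : (n.centralBinom : ℝ) ≠ 0 := by exact_mod_cast n.centralBinom_ne_zero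
    field_simp
    linear_combination hstep

theorem Stirling.factorial_eq_stirlingSeq_mul {n : ℕ} (hn : n ≠ 0) :
    (n ! : ℝ) = stirlingSeq n * (√(2 * n) * (n / exp 1) ^ n) := by
  rw [stirlingSeq, div_mul_cancel₀]
  positivity

theorem centralBinom_mul_sqrt_div_four_pow_eq_stirlingSeq {n : ℕ} (hn : n ≠ 0) :
    (n.centralBinom : ℝ) * √(π * n) / 4 ^ n =
      √π * stirlingSeq (2 * n) / stirlingSeq n ^ 2 := by
  have hs : stirlingSeq n ≠ 0 := ((sqrt_pos.mpr pi_pos).trans_le (sqrt_pi_le_stirlingSeq hn)).ne'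
  rw [Nat.centralBinom_eq_two_mul_choose, Nat.cast_choose ℝ (by omega), two_mul n,
    Nat.add_sub_cancel, ← two_mul, factorial_eq_stirlingSeq_mul hn,
    factorial_eq_stirlingSeq_mul (by omega)]
  have hsqrt : √(2 * ((2 * n : ℕ) : ℝ)) = 2 * √n := by
    rw [Nat.cast_mul, Nat.cast_two, ← mul_assoc, show (2 * 2 : ℝ) = 2 ^ 2 by norm_num,
      Real.sqrt_mul (by positivity), Real.sqrt_sq zero_le_two]
  have hpow : (((2 * n : ℕ) : ℝ) / exp 1) ^ (2 * n) = 4 ^ n * ((n / exp 1) ^ n) ^ 2 := by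
    rw [Nat.cast_mul, mul_div_assoc, mul_pow, pow_mul, pow_mul']
    norm_num
  have hn' : √(2 * (n : ℝ)) ^ 2 = 2 * n := Real.sq_sqrt (by positivity)
  rw [hsqrt, hpow, Real.sqrt_mul pi_pos.le]
  field_simp
  rw [hn', Real.sq_sqrt (Nat.cast_nonneg n)]
  ring

theorem tendsto_centralBinom_mul_sqrt_div_four_pow :
    Tendsto (fun n : ℕ => (n.centralBinom : ℝ) * √(π * n) / 4 ^ n) atTop (𝓝 1) := by
  have hπ : √π ≠ 0 := (sqrt_pos.mpr pi_pos).ne'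
  have h := (tendsto_stirlingSeq_sqrt_pi.comp (tendsto_id.const_mul_atTop' two_pos)).const_mul √π
    |>.div (tendsto_stirlingSeq_sqrt_pi.pow 2) (pow_ne_zero 2 hπ)
  rw [← sq, div_self (pow_ne_zero 2 hπ)] at h
  refine h.congr' ?_
  filter_upwards [eventually_ne_atTop 0] with n hn
  exact (centralBinom_mul_sqrt_div_four_pow_eq_stirlingSeq hn).symm

theorem Real.rpow_three_halves {x : ℝ} (hx : 0 ≤ x) : x ^ ((3 : ℝ) / 2) = x * √x := by
  rw [show (3 : ℝ) / 2 = 1 + 1 / 2 by norm_num, rpow_add' hx (by norm_num), rpow_one,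
    sqrt_eq_rpow]

theorem catalanTriangleB_asymptotic (k : ℕ) (hk : 1 ≤ k) :
    Filter.Tendsto
      (fun n : ℕ =>
        catalanTriangleB n k * Real.sqrt Real.pi * (n : ℝ) ^ ((3 : ℝ) / 2) / (4 ^ n * k))
      Filter.atTop (nhds 1) := by
  have h := (tendsto_choose_two_mul_sub_div_centralBinom k).mul
    tendsto_centralBinom_mul_sqrt_div_four_pow
  rw [mul_one] at h
  refine h.congr' ?_
  filter_upwards [eventually_ne_atTop 0] with n hn
  have hk' : (k : ℝ) ≠ 0 := by exact_mod_cast (by omega : k ≠ 0)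
  have hcb : (n.centralBinom : ℝ) ≠ 0 := by exact_mod_cast n.centralBinom_ne_zero
  rw [catalanTriangleB, rpow_three_halves n.cast_nonneg, sqrt_mul pi_pos.le]
  field_simp
end
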